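/- arXiv:1410.3735 — 6 statements merged into one kernel-verified Lean document; each statement's English description precedes it below -/
import Mathlib

section
/- Let c₁ be a PMF on A₁, c₂ a PMF on A₂, f₁ : A₁ → PMF D, f₂ : A₂ → PMF D, and v₁, v₂ : D. Suppose f : A₂ → A₁ restricts to a bijection from the support of c₂ onto the support of c₁, that c₁ (f x) = c₂ x for every x in the support of c₂, and that (f₁ (f x)) v₁ = (f₂ x) v₂ for every x in the support of c₂. Then (c₁.bind f₁) v₁ = (c₂.bind f₂) v₂. (Paper's Theorem 4, Distribution Isomorphism.) -/
theorem pmf_bind_isomorphism {A₁ A₂ D : Type*} (c₁ : PMF A₁) (c₂ : PMF A₂)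
    (f₁ : A₁ → PMF D) (f₂ : A₂ → PMF D) (v₁ v₂ : D) (f : A₂ → A₁)
    (hbij : Set.BijOn f c₂.support c₁.support)
    (hprob : ∀ x ∈ c₂.support, c₁ (f x) = c₂ x)
    (hcont : ∀ x ∈ c₂.support, (f₁ (f x)) v₁ = (f₂ x) v₂) :
    (c₁.bind f₁) v₁ = (c₂.bind f₂) v₂ := by
  rw [PMF.bind_apply, PMF.bind_apply]
  have hsub : ∀ x : A₂, c₂ x * (f₂ x) v₂ ≠ 0 → x ∈ c₂.support := by
    intro x hx
    simp [PMF.mem_support_iff]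
    intro h; exact hx (by simp [h])
  refine tsum_eq_tsum_of_ne_zero_bij (fun x => f x.1) ?_ ?_ ?_
  · intro x y hxy
    exact Subtype.ext (hbij.injOn (hsub _ x.2) (hsub _ y.2) hxy)
  · intro a ha
    simp only [Function.mem_support, ne_eq] at ha
    have ha1 : a ∈ c₁.support := by
      rw [PMF.mem_support_iff]; intro h; exact ha (by simp [h])
    obtain ⟨x, hx, hfx⟩ := hbij.surjOn ha1
    refine ⟨⟨x, ?_⟩, hfx⟩
    simp only [Function.mem_support, ne_eq]
    rw [← hprob x hx, ← hcont x hx, hfx]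
    exact ha
  · intro x
    rw [hprob x.1 (hsub _ x.2), hcont x.1 (hsub _ x.2)]
end

section
/- Let c₁ and c₂ be PMFs on a type A, let B : A → Bool be a 'bad event' indicator, and let P : A → X be a projection. Suppose (i) the pushforward distributions of B under c₁ and c₂ are equal, i.e. for every b : Bool, ∑_{a : B a = b} c₁ a = ∑_{a : B a = b} c₂ a, and (ii) for every x : X, the probability under c₁ that (P a, B a) = (x, false) equals the probability under c₂ that (P a, B a) = (x, false). Then for every x : X, the absolute difference between the probability under c₁ that P a = x and the probability under c₂ that P a = x is at most the probability under c₁ that B a = true. (Paper's Theorem 5, Identical Until Bad / Fundamental Lemma.) -/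
open scoped ENNReal

lemma pmf_outer_add {A : Type*} (p : PMF A) (s t : Set A) (h : Disjoint s t) :
    p.toOuterMeasure (s ∪ t) = p.toOuterMeasure s + p.toOuterMeasure t := by
  simp only [PMF.toOuterMeasure_apply]
  rw [← ENNReal.tsum_add]
  congr 1
  ext a
  by_cases hs : a ∈ s
  · have ht : a ∉ t := fun ht => Set.disjoint_left.mp h hs ht
    simp [Set.indicator_apply, hs, ht]
  · by_cases ht : a ∈ t <;> simp [Set.indicator_apply, hs, ht]

theorem pmf_identical_until_bad {A X : Type*} (c₁ c₂ : PMF A)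
    (B : A → Bool) (P : A → X)
    (hbad : ∀ b : Bool,
      c₁.toOuterMeasure {a | B a = b} = c₂.toOuterMeasure {a | B a = b})
    (hgood : ∀ x : X,
      c₁.toOuterMeasure {a | P a = x ∧ B a = false} =
        c₂.toOuterMeasure {a | P a = x ∧ B a = false}) :
    ∀ x : X,
      max (c₁.toOuterMeasure {a | P a = x} - c₂.toOuterMeasure {a | P a = x})
          (c₂.toOuterMeasure {a | P a = x} - c₁.toOuterMeasure {a | P a = x})
        ≤ c₁.toOuterMeasure {a | B a = true} := by
  intro x
  have hsplit : {a | P a = x} =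
      {a | P a = x ∧ B a = false} ∪ {a | P a = x ∧ B a = true} := by
    ext a
    simp only [Set.mem_setOf_eq, Set.mem_union]
    cases h : B a <;> tauto
  have hdisj : Disjoint {a : A | P a = x ∧ B a = false} {a | P a = x ∧ B a = true} := by
    rw [Set.disjoint_left]
    rintro a ⟨_, h0⟩ ⟨_, h1⟩
    simp [h0] at h1
  have h1 := pmf_outer_add c₁ _ _ hdisj
  have h2 := pmf_outer_add c₂ _ _ hdisj
  rw [← hsplit] at h1 h2
  have ht1 : c₁.toOuterMeasure {a | P a = x ∧ B a = true} ≤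
      c₁.toOuterMeasure {a | B a = true} :=
    c₁.toOuterMeasure.mono (fun a ha => ha.2)
  have ht2 : c₂.toOuterMeasure {a | P a = x ∧ B a = true} ≤
      c₂.toOuterMeasure {a | B a = true} :=
    c₂.toOuterMeasure.mono (fun a ha => ha.2)
  rw [← hbad true] at ht2
  apply max_le
  · rw [tsub_le_iff_right, h1, h2, hgood x]
    calc c₂.toOuterMeasure {a | P a = x ∧ B a = false}
          + c₁.toOuterMeasure {a | P a = x ∧ B a = true}
        ≤ c₂.toOuterMeasure {a | P a = x ∧ B a = false}
          + c₁.toOuterMeasure {a | B a = true} := by gcongr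
      _ ≤ _ := by rw [add_comm]; gcongr; exact le_add_right le_rfl
  · rw [tsub_le_iff_right, h1, h2, hgood x]
    calc c₂.toOuterMeasure {a | P a = x ∧ B a = false}
          + c₂.toOuterMeasure {a | P a = x ∧ B a = true}
        ≤ c₂.toOuterMeasure {a | P a = x ∧ B a = false}
          + c₁.toOuterMeasure {a | B a = true} := by gcongr
      _ ≤ _ := by rw [add_comm]; gcongr; exact le_add_right le_rfl
end

section
/- Let p be a PMF on A, q a PMF on B, x : A, and y : B. Then there exists a coupling of p and q with respect to the relation Φ a b := (a = x ↔ b = y) if and only if p x = q y. (Paper's Theorem 6, Soundness/Completeness of the relational program logic with respect to equality of probabilities.) -/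
/-!
Both the relation `a = x ↔ b = y` and the equation `p x = q y` factor through the indicators
`f a = [a = x]`, `g b = [b = y]`: a coupling supported on `{f a = g b}` exists iff the image
distributions `p.map f` and `q.map g` agree. Necessity holds because both images are then the
image of the coupling under `f ∘ fst = g ∘ snd`. For sufficiency, with `m` the common image, the
coupling that is conditionally independent given the common value,
`d (a, b) = [f a = g b] · p a · q b / m (f a)`, has marginals `p` and `q`.
-/

open scoped ENNReal

namespace PMF

variable {α β A B ι : Type*}

lemma map_eq_map_of_eqOn_support {d : PMF α} {u v : α → β} (h : Set.EqOn u v d.support) :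
    d.map u = d.map v := by
  ext b
  simp only [map_apply]
  refine tsum_congr fun a => ?_
  by_cases ha : a ∈ d.support
  · rw [h ha]
  · simp [(apply_eq_zero_iff d a).mpr ha]

lemma map_fst_apply (d : PMF (A × B)) (a : A) : d.map Prod.fst a = ∑' b, d (a, b) := by
  rw [map_apply, ENNReal.tsum_prod']
  exact (tsum_eq_single a fun a' ha' => by simp [Ne.symm ha']).trans (by simp)

lemma map_snd_apply (d : PMF (A × B)) (b : B) : d.map Prod.snd b = ∑' a, d (a, b) := by
  rw [map_apply, ENNReal.tsum_prod']
  exact tsum_congr fun a => (tsum_eq_single b fun b' hb' => by simp [Ne.symm hb']).trans (by simp)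

lemma apply_le_map_apply (p : PMF α) (f : α → β) (a : α) : p a ≤ p.map f (f a) := by
  rw [map_apply]
  exact le_of_eq_of_le (by simp) (ENNReal.le_tsum a)

section CondIndepCoupling

variable (p : PMF A) (q : PMF B) (f : A → ι) (g : B → ι) (m : PMF ι)

open scoped Classical in
noncomputable def condIndepCouplingFun (z : A × B) : ℝ≥0∞ :=
  if f z.1 = g z.2 then p z.1 * q z.2 / m (f z.1) else 0

lemma condIndepCouplingFun_swap (a : A) (b : B) :
    condIndepCouplingFun q p g f m (b, a) = condIndepCouplingFun p q f g m (a, b) := by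
  rcases eq_or_ne (f a) (g b) with h | h
  · simp [condIndepCouplingFun, h, mul_comm]
  · simp [condIndepCouplingFun, h, h.symm]

variable {p q f g m}

open scoped Classical in
lemma tsum_condIndepCouplingFun_right (hp : p.map f = m) (hq : q.map g = m) (a : A) :
    ∑' b, condIndepCouplingFun p q f g m (a, b) = p a := by
  have hpa : p a ≤ m (f a) := hp ▸ apply_le_map_apply p f a
  calc ∑' b, condIndepCouplingFun p q f g m (a, b)
      = p a * (∑' b, if f a = g b then q b else 0) / m (f a) := by
        simp only [condIndepCouplingFun, ENNReal.div_eq_inv_mul, ← ENNReal.tsum_mul_left]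
        refine tsum_congr fun b => ?_
        split_ifs <;> ring
    _ = p a * m (f a) / m (f a) := by rw [← map_apply, hq]
    -- if `m (f a) = 0` then also `p a = 0`, so the junk value `0 / 0 = 0` is the right one
    _ = p a := ENNReal.mul_div_cancel_right' (fun h => le_antisymm (h ▸ hpa) bot_le)
        (fun h => absurd h (m.apply_ne_top _))

lemma tsum_condIndepCouplingFun_left (hp : p.map f = m) (hq : q.map g = m) (b : B) :
    ∑' a, condIndepCouplingFun p q f g m (a, b) = q b :=
  (tsum_congr fun a => (condIndepCouplingFun_swap p q f g m a b).symm).trans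
    (tsum_condIndepCouplingFun_right hq hp b)

noncomputable def condIndepCoupling (hp : p.map f = m) (hq : q.map g = m) : PMF (A × B) :=
  ⟨condIndepCouplingFun p q f g m, by
    rw [ENNReal.summable.hasSum_iff, ENNReal.tsum_prod',
      tsum_congr (tsum_condIndepCouplingFun_right hp hq), p.tsum_coe]⟩

lemma map_fst_condIndepCoupling (hp : p.map f = m) (hq : q.map g = m) :
    (condIndepCoupling hp hq).map Prod.fst = p :=
  PMF.ext fun a => (map_fst_apply _ a).trans (tsum_condIndepCouplingFun_right hp hq a)

lemma map_snd_condIndepCoupling (hp : p.map f = m) (hq : q.map g = m) :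
    (condIndepCoupling hp hq).map Prod.snd = q :=
  PMF.ext fun b => (map_snd_apply _ b).trans (tsum_condIndepCouplingFun_left hp hq b)

lemma apply_eq_apply_of_mem_support_condIndepCoupling (hp : p.map f = m) (hq : q.map g = m)
    {z : A × B} (hz : z ∈ (condIndepCoupling hp hq).support) : f z.1 = g z.2 := by
  by_contra h
  exact hz (if_neg h)

end CondIndepCoupling

theorem exists_coupling_iff_map_eq (p : PMF A) (q : PMF B) (f : A → ι) (g : B → ι) :
    (∃ d : PMF (A × B), d.map Prod.fst = p ∧ d.map Prod.snd = q ∧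
        ∀ z ∈ d.support, f z.1 = g z.2) ↔ p.map f = q.map g := by
  constructor
  · rintro ⟨d, rfl, rfl, hd⟩
    simpa only [map_comp] using
      map_eq_map_of_eqOn_support (u := f ∘ Prod.fst) (v := g ∘ Prod.snd) hd
  · intro h
    exact ⟨condIndepCoupling h rfl, map_fst_condIndepCoupling h rfl,
      map_snd_condIndepCoupling h rfl,
      fun _ => apply_eq_apply_of_mem_support_condIndepCoupling h rfl⟩

lemma eq_of_apply_true_eq {μ ν : PMF Bool} (h : μ true = ν true) : μ = ν := by
  have apply_false (μ : PMF Bool) : μ false = 1 - μ true :=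
    ENNReal.eq_sub_of_add_eq (μ.apply_ne_top _) (by rw [← tsum_bool, μ.tsum_coe])
  ext (_ | _)
  · rw [apply_false, apply_false, h]
  · exact h

lemma map_decide_eq_apply_true [DecidableEq α] (p : PMF α) (x : α) :
    p.map (fun a => decide (a = x)) true = p x := by
  simp [map_apply]

lemma map_decide_eq_eq_iff [DecidableEq A] [DecidableEq B] (p : PMF A) (q : PMF B)
    (x : A) (y : B) :
    p.map (fun a => decide (a = x)) = q.map (fun b => decide (b = y)) ↔ p x = q y := by
  rw [← map_decide_eq_apply_true p x, ← map_decide_eq_apply_true q y]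
  exact ⟨fun h => h ▸ rfl, eq_of_apply_true_eq⟩

end PMF

theorem pmf_coupling_iff_eq_prob {A B : Type*} (p : PMF A) (q : PMF B) (x : A) (y : B) :
    (∃ d : PMF (A × B),
        d.map Prod.fst = p ∧ d.map Prod.snd = q ∧
        ∀ z ∈ d.support, (z.1 = x ↔ z.2 = y)) ↔
      p x = q y := by
  classical
  simpa only [decide_eq_decide] using
    (PMF.exists_coupling_iff_map_eq p q (fun a => decide (a = x)) (fun b => decide (b = y))).trans
      (PMF.map_decide_eq_eq_iff p q x y)
end

section
/- Let p be a PMF on A, q a PMF on B, x : A, and y : B. Then there exists a coupling of p and q with respect to the relation Φ a b := (a = x → b = y) if and only if p x ≤ q y. (Paper's Theorem 7, Soundness/Completeness of the relational program logic with respect to inequality of probabilities.) -/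
/-!
Under a coupling supported on `{(a, b) | a = x → b = y}`, every pair with first coordinate `x`
is `(x, y)`, so the mass `p x` sits on `(x, y)` and is at most `q y`. Conversely, if
`p x ≤ q y`, write `q = p x • δ_y + (1 - p x) • q'`; drawing `a ∼ p` and then `y` if `a = x`,
and an independent sample of `q'` otherwise, is the required coupling.
-/

open ENNReal

namespace PMF

variable {α β γ : Type*}

theorem map_apply_le_map_apply_of_support (d : PMF γ) {f : γ → α} {g : γ → β} {a : α} {b : β}
    (h : ∀ z ∈ d.support, f z = a → g z = b) : d.map f a ≤ d.map g b := by
  rw [← toOuterMeasure_apply_singleton, ← toOuterMeasure_apply_singleton,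
    toOuterMeasure_map_apply, toOuterMeasure_map_apply]
  exact toOuterMeasure_mono _ fun z ⟨hz, hzd⟩ => h z hzd hz

theorem eq_pure_of_apply_eq_one {p : PMF α} {a : α} (h : p a = 1) : p = pure a := by
  ext a'
  by_cases ha : a' = a
  · rw [ha, h, pure_apply_self]
  · rw [pure_apply_of_ne _ _ ha, apply_eq_zero_iff, (apply_eq_one_iff p a).1 h]
    exact ha

theorem tsum_ite_eq_one_sub [DecidableEq α] (p : PMF α) (a : α) :
    ∑' a', (if a' = a then 0 else p a') = 1 - p a :=
  ENNReal.eq_sub_of_add_eq (p.apply_ne_top a) <| by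
    rw [add_comm, ← p.tsum_coe, ENNReal.summable.tsum_eq_add_tsum_ite' (f := p) a]

theorem bind_ite_apply [DecidableEq α] (p : PMF α) (a : α) (r s : PMF β) (b : β) :
    p.bind (fun a' => if a' = a then r else s) b = p a * r b + (1 - p a) * s b := by
  rw [bind_apply, ENNReal.summable.tsum_eq_add_tsum_ite' a, if_pos rfl, ← tsum_ite_eq_one_sub,
    ← ENNReal.tsum_mul_right]
  congr 1
  refine tsum_congr fun a' => ?_
  split_ifs <;> simp

theorem exists_eq_mul_pure_add_mul {t : ℝ≥0∞} (q : PMF β) (y : β) (ht : t ≤ q y) :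
    ∃ q' : PMF β, ∀ b, q b = t * pure y b + (1 - t) * q' b := by
  by_cases ht1 : t = 1
  · have hq : q = pure y := eq_pure_of_apply_eq_one (le_antisymm (q.coe_le_one y) (ht1 ▸ ht))
    exact ⟨q, fun b => by simp [ht1, hq]⟩
  set r : β → ℝ≥0∞ := fun b => q b - t * pure y b
  have hle : ∀ b, t * pure y b ≤ q b := fun b => by
    by_cases hb : b = y
    · simpa [hb] using ht
    · simp [pure_apply_of_ne _ _ hb]
  have hr : ∑' b, r b = 1 - t := by
    refine ENNReal.eq_sub_of_add_eq (ne_top_of_le_ne_top (q.apply_ne_top y) ht) ?_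
    calc ∑' b, r b + t = ∑' b, r b + ∑' b, t * pure y b := by
          rw [ENNReal.tsum_mul_left, tsum_coe, mul_one]
      _ = ∑' b, (r b + t * pure y b) := ENNReal.tsum_add.symm
      _ = 1 := by simp_rw [r, tsub_add_cancel_of_le (hle _)]; exact q.tsum_coe
  have hsub_ne_zero : 1 - t ≠ 0 := (tsub_pos_of_lt (lt_of_le_of_ne (ht.trans (q.coe_le_one y)) ht1)).ne'
  have hsub_ne_top : 1 - t ≠ ∞ := sub_ne_top one_ne_top
  refine ⟨normalize r (hr ▸ hsub_ne_zero) (hr ▸ hsub_ne_top), fun b => ?_⟩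
  rw [normalize_apply, hr, mul_left_comm, ENNReal.mul_inv_cancel hsub_ne_zero hsub_ne_top, mul_one]
  exact (add_tsub_cancel_of_le (hle b)).symm

noncomputable def compProd (p : PMF α) (κ : α → PMF β) : PMF (α × β) :=
  p.bind fun a => (κ a).map (Prod.mk a)

theorem map_fst_compProd (p : PMF α) (κ : α → PMF β) : (p.compProd κ).map Prod.fst = p := by
  simp only [compProd, map_bind, map_comp]
  exact (congrArg p.bind (funext fun a => map_const (κ a) a)).trans p.bind_pure

theorem map_snd_compProd (p : PMF α) (κ : α → PMF β) :
    (p.compProd κ).map Prod.snd = p.bind κ := by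
  simp only [compProd, map_bind, map_comp]
  exact congrArg p.bind (funext fun a => map_id (κ a))

theorem snd_mem_support_of_mem_support_compProd {p : PMF α} {κ : α → PMF β} {z : α × β}
    (hz : z ∈ (p.compProd κ).support) : z.2 ∈ (κ z.1).support := by
  obtain ⟨a, -, b, hb, rfl⟩ : ∃ a ∈ p.support, ∃ b ∈ (κ a).support, (a, b) = z := by
    simpa [compProd] using hz
  exact hb

end PMF

theorem pmf_coupling_iff_le_prob {A B : Type*} (p : PMF A) (q : PMF B) (x : A) (y : B) :
    (∃ d : PMF (A × B),
        d.map Prod.fst = p ∧ d.map Prod.snd = q ∧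
        ∀ z ∈ d.support, (z.1 = x → z.2 = y)) ↔
      p x ≤ q y := by
  classical
  constructor
  · rintro ⟨d, rfl, rfl, hsupp⟩
    exact d.map_apply_le_map_apply_of_support hsupp
  · intro hpq
    obtain ⟨q', hq'⟩ := q.exists_eq_mul_pure_add_mul y hpq
    let κ : A → PMF B := fun a => if a = x then PMF.pure y else q'
    refine ⟨p.compProd κ, p.map_fst_compProd κ, ?_, fun z hz hzx => ?_⟩
    · rw [PMF.map_snd_compProd]
      ext b
      rw [PMF.bind_ite_apply, hq']
    · simpa [κ, hzx] using PMF.snd_mem_support_of_mem_support_compProd hz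
end

section
/- Let p be a PMF on A, q a PMF on B, r : A → PMF C, s : B → PMF D, and let Φ' be a relation on A × B and Φ a relation on C × D. If p ∼ q {Φ'} and for all a : A, b : B with Φ' a b we have (r a) ∼ (s b) {Φ}, then (p.bind r) ∼ (q.bind s) {Φ}. (Paper's Theorem 8, the Sequence Rule of the probabilistic relational program logic.) -/
theorem pmf_coupling_bind {A B C D : Type*} (p : PMF A) (q : PMF B)
    (r : A → PMF C) (s : B → PMF D)
    (Φ' : A → B → Prop) (Φ : C → D → Prop)
    (hpq : ∃ d : PMF (A × B),
        d.map Prod.fst = p ∧ d.map Prod.snd = q ∧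
        ∀ z ∈ d.support, Φ' z.1 z.2)
    (hrs : ∀ a b, Φ' a b →
      ∃ d : PMF (C × D),
        d.map Prod.fst = r a ∧ d.map Prod.snd = s b ∧
        ∀ z ∈ d.support, Φ z.1 z.2) :
    ∃ d : PMF (C × D),
      d.map Prod.fst = p.bind r ∧ d.map Prod.snd = q.bind s ∧
      ∀ z ∈ d.support, Φ z.1 z.2 := by
  classical
  obtain ⟨d0, hfst, hsnd, hsupp⟩ := hpq
  set f : A × B → PMF (C × D) := fun z =>
    if h : Φ' z.1 z.2 then (hrs z.1 z.2 h).choose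
    else (r z.1).bind fun c => (s z.2).map (Prod.mk c) with hf
  have hffst : ∀ z, (f z).map Prod.fst = r z.1 := by
    intro z
    by_cases h : Φ' z.1 z.2
    · simp only [hf, dif_pos h]
      exact (hrs z.1 z.2 h).choose_spec.1
    · simp only [hf, dif_neg h]
      rw [PMF.map_bind]
      have : ∀ c : C, ((s z.2).map (Prod.mk c)).map Prod.fst = PMF.pure c := by
        intro c
        rw [PMF.map_comp]
        simp [Function.comp, PMF.map_id]
      simp_rw [this]
      exact PMF.bind_pure _
  have hfsnd : ∀ z, (f z).map Prod.snd = s z.2 := by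
    intro z
    by_cases h : Φ' z.1 z.2
    · simp only [hf, dif_pos h]
      exact (hrs z.1 z.2 h).choose_spec.2.1
    · simp only [hf, dif_neg h]
      rw [PMF.map_bind]
      have : ∀ c : C, ((s z.2).map (Prod.mk c)).map Prod.snd = s z.2 := by
        intro c
        rw [PMF.map_comp]
        simp [Function.comp, PMF.map_id]
      simp_rw [this]
      exact PMF.bind_const _ _
  refine ⟨d0.bind f, ?_, ?_, ?_⟩
  · rw [PMF.map_bind]
    simp_rw [hffst]
    rw [← hfst, PMF.bind_map]
    rfl
  · rw [PMF.map_bind]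
    simp_rw [hfsnd]
    rw [← hsnd, PMF.bind_map]
    rfl
  · intro z hz
    simp only [PMF.support_bind, Set.mem_iUnion] at hz
    obtain ⟨w, hw, hzw⟩ := hz
    have h := hsupp w hw
    simp only [hf, dif_pos h] at hzw
    exact (hrs w.1 w.2 h).choose_spec.2.2 z hzw
end

section
/- Let p and q be PMFs on the same type A. Then there exists a coupling of p and q with respect to the equality relation (Φ a b := a = b) if and only if p = q. (The framework's relational specification characterizing distributional equivalence.) -/
theorem pmf_coupling_eq_rel_iff {A : Type*} (p q : PMF A) :
    (∃ d : PMF (A × A),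
        d.map Prod.fst = p ∧ d.map Prod.snd = q ∧
        ∀ z ∈ d.support, z.1 = z.2) ↔
      p = q := by
  constructor
  · rintro ⟨d, hp, hq, hdiag⟩
    rw [← hp, ← hq]
    ext a
    rw [PMF.map_apply, PMF.map_apply]
    refine tsum_congr fun z => ?_
    by_cases hz : z ∈ d.support
    · rw [hdiag z hz]
    · simp only [PMF.mem_support_iff, not_not] at hz
      simp [hz]
  · rintro rfl
    refine ⟨p.map (fun a => (a, a)), ?_, ?_, ?_⟩
    · rw [PMF.map_comp]; exact PMF.map_id p
    · rw [PMF.map_comp]; exact PMF.map_id p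
    · intro z hz
      rw [PMF.support_map] at hz
      obtain ⟨a, _, rfl⟩ := hz
      rfl
end
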